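/- arXiv:2206.10420 — 2 statements merged into one kernel-verified Lean document; each statement's English description precedes it below -/
import Mathlib

section
/- Let w be a MacLane pseudo-valuation on K[x] with w ≠ v_0, written as an augmentation w = [v, w(φ_w) = λ_w] of a MacLane valuation v by a key polynomial φ_w over v. Then a polynomial φ ∈ K[x] is a centre of w if and only if φ is a key polynomial over w and deg φ = deg w. Moreover, any two centres of w are v-equivalent. -/
/-!
Write `[u, φ ↦ λ]` for `augVal u φ λ`. It agrees with `u` in degrees below `deg φ`, it is a
pseudo-valuation over which `φ` is again a key polynomial (MacLane), and it lies below every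
pseudo-valuation that agrees with `u` below `deg φ` and is at least `λ` at `φ`.

If also `w = [v', φ ↦ λ']` with `deg φ_w < deg φ`, this minimality gives `w ≤ v'` and hence
`λ' = w φ ≤ v' φ < λ'`; by symmetry every centre has degree `deg φ_w`. Conversely, let `φ` be a
key polynomial over `w` with `deg φ = deg φ_w`. Were `v (φ - φ_w) < λ_w`, then `φ` would
`w`-divide `φ - φ_w`, of smaller degree; so `φ ≈_v φ_w`, `φ` is a key polynomial over `v`, and by
minimality `[v, φ ↦ λ_w]` and `[v, φ_w ↦ λ_w]` lie below each other. The same inequality makes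
every centre `v`-equivalent to `φ_w`.
-/

open Polynomial
open scoped Classical

noncomputable section

/-- The value monoid `ℚ ∪ {∞}`. -/
abbrev Qinf : Type := WithTop ℚ

/-- A pseudo-valuation on a commutative ring `A`, with values in `ℚ ∪ {∞}`:
`v (a*b) = v a + v b` and `v (a+b) ≥ min (v a) (v b)`. -/
structure IsPseudoVal {A : Type*} [CommRing A] (v : A → Qinf) : Prop where
  map_mul : ∀ a b : A, v (a * b) = v a + v b
  min_le_map_add : ∀ a b : A, min (v a) (v b) ≤ v (a + b)

variable {K : Type*} [Field K]

/-- `vK` is a normalised discrete valuation on the field `K`. -/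
structure IsNormDiscreteVal (vK : K → Qinf) : Prop where
  pseudo : IsPseudoVal vK
  top_iff : ∀ a : K, vK a = ⊤ ↔ a = 0
  int_valued : ∀ a : K, a ≠ 0 → ∃ n : ℤ, vK a = ((n : ℚ) : Qinf)
  normalised : ∃ π : K, vK π = ((1 : ℚ) : Qinf)

/-- `K` is complete with respect to the valuation `vK`:
every Cauchy sequence (for `vK`) converges. -/
def IsCompleteVal (vK : K → Qinf) : Prop :=
  ∀ s : ℕ → K,
    (∀ M : ℚ, ∃ N : ℕ, ∀ m, N ≤ m → ∀ n, N ≤ n → ((M : ℚ) : Qinf) ≤ vK (s m - s n)) →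
    ∃ a : K, ∀ M : ℚ, ∃ N : ℕ, ∀ n, N ≤ n → ((M : ℚ) : Qinf) ≤ vK (s n - a)

/-- The Gauss valuation on `K[x]`: `v₀ (∑ aᵢ xⁱ) = minᵢ vK aᵢ`. -/
def gaussVal (vK : K → Qinf) (g : Polynomial K) : Qinf :=
  g.support.inf fun i => vK (g.coeff i)

/-- `g ≈_v h` : `g` is `v`-equivalent to `h`, i.e. `v (g - h) > v g`. -/
def VEquiv (v : Polynomial K → Qinf) (g h : Polynomial K) : Prop :=
  v g < v (g - h)

/-- `h |_v g` : `g` is `v`-divisible by `h`, i.e. `g ≈_v q * h` for some `q`. -/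
def VDvd (v : Polynomial K → Qinf) (h g : Polynomial K) : Prop :=
  ∃ q : Polynomial K, VEquiv v g (q * h)

/-- `φ` is `v`-irreducible. -/
def VIrreducible (v : Polynomial K → Qinf) (φ : Polynomial K) : Prop :=
  ∀ a b : Polynomial K, VDvd v φ (a * b) → VDvd v φ a ∨ VDvd v φ b

/-- `φ` is `v`-minimal: whatever `φ` `v`-divides has degree at least `deg φ`. -/
def VMinimal (v : Polynomial K → Qinf) (φ : Polynomial K) : Prop :=
  ∀ a : Polynomial K, VDvd v φ a → φ.natDegree ≤ a.natDegree

/-- `φ` is a key polynomial over `v`. -/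
def IsKeyPoly (v : Polynomial K → Qinf) (φ : Polynomial K) : Prop :=
  φ.Monic ∧ VIrreducible v φ ∧ VMinimal v φ

/-- Auxiliary fuelled definition of the augmented pseudo-valuation. -/
def augValAux (v : Polynomial K → Qinf) (φ : Polynomial K) (lam : Qinf) :
    ℕ → Polynomial K → Qinf
  | 0, _ => ⊤
  | n + 1, g =>
      if g = 0 then ⊤ else min (v (g %ₘ φ)) (lam + augValAux v φ lam n (g /ₘ φ))

/-- The augmentation `w = [v, w(φ) = λ]`, defined by
`w (∑ aᵢ φ^i) = minᵢ (v aᵢ + i•λ)` on `φ`-adic expansions with `deg aᵢ < deg φ`. -/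
def augVal (v : Polynomial K → Qinf) (φ : Polynomial K) (lam : Qinf)
    (g : Polynomial K) : Qinf :=
  augValAux v φ lam (g.natDegree + 1) g

/-- MacLane pseudo-valuations on `K[x]`: obtained from the Gauss valuation by
finitely many augmentations by key polynomials. -/
inductive IsMacLane (vK : K → Qinf) : (Polynomial K → Qinf) → Prop
  | gauss : IsMacLane vK (gaussVal vK)
  | aug {v : Polynomial K → Qinf} {φ : Polynomial K} {lam : Qinf} :
      IsMacLane vK v → IsKeyPoly v φ → v φ < lam → IsMacLane vK (augVal v φ lam)

/-- MacLane valuations: MacLane pseudo-valuations which are valuations. -/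
def IsMacLaneVal (vK : K → Qinf) (v : Polynomial K → Qinf) : Prop :=
  IsMacLane vK v ∧ ∀ g : Polynomial K, v g = ⊤ → g = 0

/-- `φ` is a centre of the MacLane pseudo-valuation `w`: the last key polynomial of
an augmentation chain for `w` (for the Gauss valuation: any monic integral degree 1
polynomial). -/
def IsCentre (vK : K → Qinf) (w : Polynomial K → Qinf) (φ : Polynomial K) : Prop :=
  (w = gaussVal vK ∧ φ.Monic ∧ φ.natDegree = 1 ∧ ∀ i : ℕ, 0 ≤ vK (φ.coeff i)) ∨
  ∃ (v : Polynomial K → Qinf) (lam : Qinf),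
    IsMacLane vK v ∧ IsKeyPoly v φ ∧ v φ < lam ∧ w = augVal v φ lam

/-- `r` is the radius `λ_w` of the MacLane pseudo-valuation `w`. -/
def HasRadius (vK : K → Qinf) (w : Polynomial K → Qinf) (r : Qinf) : Prop :=
  (w = gaussVal vK ∧ r = 0) ∨
  ∃ (v : Polynomial K → Qinf) (φ : Polynomial K),
    IsMacLane vK v ∧ IsKeyPoly v φ ∧ v φ < r ∧ w = augVal v φ r

/-- `d` is the degree `deg w` of the MacLane pseudo-valuation `w`. -/
def HasMLDegree (vK : K → Qinf) (w : Polynomial K → Qinf) (d : ℕ) : Prop :=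
  (w = gaussVal vK ∧ d = 1) ∨
  ∃ (v : Polynomial K → Qinf) (φ : Polynomial K) (lam : Qinf),
    IsMacLane vK v ∧ IsKeyPoly v φ ∧ v φ < lam ∧ w = augVal v φ lam ∧
      φ.natDegree = d

variable {Kb : Type*} [Field Kb] [Algebra K Kb]

/-- `vbar` is an extension of `vK` to `Kb`. -/
structure IsExtVal (vK : K → Qinf) (vbar : Kb → Qinf) : Prop where
  pseudo : IsPseudoVal vbar
  top_iff : ∀ a : Kb, vbar a = ⊤ ↔ a = 0
  extends_vK : ∀ a : K, vbar (algebraMap K Kb a) = vK a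

/-- The discoid `D(g, λ) = {α : v_K(g(α)) ≥ λ}`. -/
def discoidSet (vbar : Kb → Qinf) (g : Polynomial K) (lam : Qinf) : Set Kb :=
  {α : Kb | lam ≤ vbar (Polynomial.aeval α g)}

/-- `D` is a discoid: `D = D(g, λ)` for some monic irreducible `g` and some `λ`. -/
def IsDiscoid (vbar : Kb → Qinf) (D : Set Kb) : Prop :=
  ∃ (g : Polynomial K) (lam : Qinf), g.Monic ∧ Irreducible g ∧
    D = discoidSet vbar g lam

/-- The set `D_v = {α : v_K(g(α)) ≥ v g for all g}` associated to `v`. -/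
def Dset (vbar : Kb → Qinf) (v : Polynomial K → Qinf) : Set Kb :=
  {α : Kb | ∀ g : Polynomial K, v g ≤ vbar (Polynomial.aeval α g)}

/-- The set of roots of `f` in `Kb`. -/
def rootSetOf (f : Polynomial K) : Set Kb :=
  {α : Kb | Polynomial.aeval α f = 0}

/-- `(s, v)` is a MacLane cluster for `f`. -/
def IsMLCluster (vK : K → Qinf) (vbar : Kb → Qinf) (f : Polynomial K)
    (s : Set Kb) (v : Polynomial K → Qinf) : Prop :=
  IsMacLane vK v ∧ s.Nonempty ∧ s = Dset vbar v ∩ rootSetOf f ∧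
  ∀ w : Polynomial K → Qinf, IsMacLane vK w → v < w →
    s = Dset vbar w ∩ rootSetOf f →
    ∀ dv dw : ℕ, HasMLDegree vK v dv → HasMLDegree vK w dw → dv < dw

/-- The `i`-th coefficient `aᵢ` of the `φ`-adic expansion `g = ∑ aᵢ φ^i`. -/
def phiCoeff (φ : Polynomial K) : ℕ → Polynomial K → Polynomial K
  | 0, g => g %ₘ φ
  | n + 1, g => phiCoeff φ n (g /ₘ φ)

/-- The right endpoint `i_w` of `L_w(f)`, for `w = [v, w(φ) = λ]`. -/
def iEnd (v : Polynomial K → Qinf) (φ : Polynomial K) (lam : Qinf)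
    (f : Polynomial K) : ℕ :=
  if lam = ⊤ then sInf {i : ℕ | phiCoeff φ i f ≠ 0}
  else sSup {i : ℕ | v (phiCoeff φ i f) + i • lam = augVal v φ lam f}

/-- The left endpoint `i⁰_w` of `L_w(f)`, for `w = [v, w(φ) = λ]`. -/
def iStart (v : Polynomial K → Qinf) (φ : Polynomial K) (lam : Qinf)
    (f : Polynomial K) : ℕ :=
  if lam = ⊤ then 0
  else sInf {i : ℕ | v (phiCoeff φ i f) + i • lam = augVal v φ lam f}

end

namespace IsPseudoVal

variable {A : Type*} [CommRing A] {u : A → Qinf}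

theorem map_one_of_ne_top (hu : IsPseudoVal u) {x : A} (hx : u x ≠ ⊤) : u 1 = 0 :=
  WithTop.add_right_cancel hx (by rw [← hu.map_mul, one_mul, zero_add])

theorem map_neg (hu : IsPseudoVal u) (x : A) : u (-x) = u x := by
  have h : u (-x) + u (-x) = u x + u x := by rw [← hu.map_mul, ← hu.map_mul, neg_mul_neg]
  have double_lt {a b : Qinf} (hab : a < b) : a + a < b + b :=
    WithTop.add_lt_add_of_lt_of_le hab.ne_top hab hab.le
  rcases lt_trichotomy (u (-x)) (u x) with hlt | heq | hgt
  · exact absurd h (double_lt hlt).ne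
  · exact heq
  · exact absurd h (double_lt hgt).ne'

theorem map_add_eq_of_lt (hu : IsPseudoVal u) {x y : A} (h : u x < u y) : u (x + y) = u x := by
  refine le_antisymm ?_ (min_eq_left h.le ▸ hu.min_le_map_add x y)
  have h' := hu.min_le_map_add (x + y) (-y)
  rw [add_neg_cancel_right, hu.map_neg] at h'
  exact (min_le_iff.1 h').resolve_right (not_le.2 h)

theorem map_sub_eq_of_lt (hu : IsPseudoVal u) {x y : A} (h : u x < u y) : u (x - y) = u x := by
  rw [sub_eq_add_neg]
  exact hu.map_add_eq_of_lt (by rwa [hu.map_neg])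

theorem map_sub_swap (hu : IsPseudoVal u) (x y : A) : u (x - y) = u (y - x) := by
  rw [← neg_sub, hu.map_neg]

end IsPseudoVal

section VEquivalence

variable {K : Type*} [Field K] {u : K[X] → Qinf} {f g h φ φ' : K[X]}

theorem VEquiv.map_eq (hu : IsPseudoVal u) (hfg : VEquiv u f g) : u g = u f := by
  simpa using hu.map_sub_eq_of_lt hfg

theorem VEquiv.symm (hu : IsPseudoVal u) (hfg : VEquiv u f g) : VEquiv u g f := by
  rw [VEquiv, hfg.map_eq hu, hu.map_sub_swap]
  exact hfg

theorem VEquiv.trans (hu : IsPseudoVal u) (hfg : VEquiv u f g) (hgh : VEquiv u g h) :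
    VEquiv u f h := by
  have hgh' : u f < u (g - h) := hfg.map_eq hu ▸ hgh
  exact (lt_min hfg hgh').trans_le (by simpa using hu.min_le_map_add (f - g) (g - h))

theorem vEquiv_of_lt_of_le_map_sub (hu : IsPseudoVal u) {lam : Qinf} (hlt : u φ < lam)
    (hle : lam ≤ u (φ' - φ)) : VEquiv u φ φ' :=
  hlt.trans_le (hu.map_sub_swap φ' φ ▸ hle)

theorem VDvd.of_vEquiv (hu : IsPseudoVal u) (hφ : VEquiv u φ φ') (hdvd : VDvd u φ g) :
    VDvd u φ' g := by
  obtain ⟨q, hq⟩ := hdvd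
  have hqφ : u (q * φ) = u g := hq.map_eq hu
  have hg : u g ≠ ⊤ := hq.ne_top
  have hq' : u q ≠ ⊤ := fun h => hg (by rw [← hqφ, hu.map_mul, h, top_add])
  have hdiff : u g < u (q * (φ - φ')) := by
    rw [← hqφ, hu.map_mul, hu.map_mul]
    exact WithTop.add_lt_add_left hq' hφ
  refine ⟨q, (lt_min hq hdiff).trans_le ?_⟩
  simpa [mul_sub] using hu.min_le_map_add (g - q * φ) (q * (φ - φ'))

theorem IsKeyPoly.of_vEquiv (hu : IsPseudoVal u) (hk : IsKeyPoly u φ) (hφ : VEquiv u φ φ')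
    (hmonic : φ'.Monic) (hdeg : φ'.natDegree = φ.natDegree) : IsKeyPoly u φ' := by
  have hφ' := hφ.symm hu
  refine ⟨hmonic, fun a b hab => ?_, fun a ha => hdeg ▸ hk.2.2 a (ha.of_vEquiv hu hφ')⟩
  exact (hk.2.1 a b (hab.of_vEquiv hu hφ')).imp (·.of_vEquiv hu hφ) (·.of_vEquiv hu hφ)

end VEquivalence

section Gauss

variable {K : Type*} [Field K] {vK : K → Qinf}

def IsNormDiscreteVal.toAddValuation (hK : IsNormDiscreteVal vK) : AddValuation K Qinf :=
  AddValuation.of vK ((hK.top_iff 0).2 rfl)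
    (hK.pseudo.map_one_of_ne_top (x := hK.normalised.choose) (by simp [hK.normalised.choose_spec]))
    hK.pseudo.min_le_map_add hK.pseudo.map_mul

theorem gaussVal_zero : gaussVal vK 0 = ⊤ := by
  simp [gaussVal]

theorem gaussVal_le_coeff (hK : IsNormDiscreteVal vK) (g : K[X]) (i : ℕ) :
    gaussVal vK g ≤ vK (g.coeff i) := by
  by_cases hi : i ∈ g.support
  · exact Finset.inf_le hi
  · rw [notMem_support_iff.1 hi, (hK.top_iff 0).2 rfl]
    exact le_top

theorem gaussVal_ne_top (hK : IsNormDiscreteVal vK) {g : K[X]} (hg : g ≠ 0) :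
    gaussVal vK g ≠ ⊤ := by
  obtain ⟨i, hi, he⟩ := Finset.exists_mem_eq_inf g.support (support_nonempty.2 hg)
    (fun i => vK (g.coeff i))
  rw [gaussVal, he, Ne, hK.top_iff]
  exact mem_support_iff.1 hi

theorem exists_coeff_eq_gaussVal (hK : IsNormDiscreteVal vK) {g : K[X]} (hg : g ≠ 0) :
    ∃ i, vK (g.coeff i) = gaussVal vK g ∧ ∀ j < i, gaussVal vK g < vK (g.coeff j) := by
  have hex : ∃ i, vK (g.coeff i) = gaussVal vK g := by
    obtain ⟨i, -, he⟩ := Finset.exists_mem_eq_inf g.support (support_nonempty.2 hg)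
      (fun i => vK (g.coeff i))
    exact ⟨i, he.symm⟩
  exact ⟨Nat.find hex, Nat.find_spec hex, fun j hj =>
    (gaussVal_le_coeff hK g j).lt_of_ne (Ne.symm (Nat.find_min hex hj))⟩

open Finset.HasAntidiagonal in
theorem gaussVal_mul (hK : IsNormDiscreteVal vK) (f g : K[X]) :
    gaussVal vK (f * g) = gaussVal vK f + gaussVal vK g := by
  set v := hK.toAddValuation
  have hv : ∀ a, v a = vK a := fun _ => rfl
  by_cases hf : f = 0
  · simp [hf, gaussVal_zero]
  by_cases hg : g = 0
  · simp [hg, gaussVal_zero]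
  refine le_antisymm ?_ (Finset.le_inf fun k _ => ?_)
  · obtain ⟨i, hi, hi_lt⟩ := exists_coeff_eq_gaussVal hK hf
    obtain ⟨j, hj, hj_lt⟩ := exists_coeff_eq_gaussVal hK hg
    have hmem : (i, j) ∈ antidiagonal (i + j) := by simp
    have hrest : gaussVal vK f + gaussVal vK g <
        v (∑ p ∈ (antidiagonal (i + j)).erase (i, j), f.coeff p.1 * g.coeff p.2) := by
      refine v.map_lt_sum (WithTop.add_ne_top.2 ⟨gaussVal_ne_top hK hf, gaussVal_ne_top hK hg⟩)
        fun p hp => ?_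
      obtain ⟨hpne, hp⟩ := Finset.mem_erase.1 hp
      rw [mem_antidiagonal] at hp
      rw [v.map_mul, hv, hv]
      rcases lt_or_ge p.1 i with h1 | h1
      · exact WithTop.add_lt_add_of_lt_of_le (gaussVal_ne_top hK hg) (hi_lt _ h1)
          (gaussVal_le_coeff hK g _)
      · have h2 : p.2 < j := by
          by_contra! h2
          exact hpne (Prod.ext (by omega) (by omega))
        rw [add_comm, add_comm (vK _)]
        exact WithTop.add_lt_add_of_lt_of_le (gaussVal_ne_top hK hf) (hj_lt _ h2)
          (gaussVal_le_coeff hK f _)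
    calc gaussVal vK (f * g) ≤ vK ((f * g).coeff (i + j)) := gaussVal_le_coeff hK _ _
      _ = gaussVal vK f + gaussVal vK g := by
        rw [coeff_mul, ← Finset.add_sum_erase _ _ hmem, ← hv,
          v.map_add_eq_of_lt_left (by rwa [v.map_mul, hv, hv, hi, hj]), v.map_mul, hv, hv, hi, hj]
  · rw [coeff_mul, ← hv]
    exact v.map_le_sum fun p _ => by
      rw [v.map_mul]
      exact add_le_add (gaussVal_le_coeff hK f _) (gaussVal_le_coeff hK g _)

theorem isPseudoVal_gaussVal (hK : IsNormDiscreteVal vK) : IsPseudoVal (gaussVal vK) where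
  map_mul := gaussVal_mul hK
  min_le_map_add f g := Finset.le_inf fun i _ => by
    rw [coeff_add]
    exact (min_le_min (gaussVal_le_coeff hK f i) (gaussVal_le_coeff hK g i)).trans
      (hK.pseudo.min_le_map_add _ _)

end Gauss

namespace Polynomial

variable {R : Type*} [CommRing R] {p q : R[X]}

theorem add_divByMonic [IsDomain R] (hq : q.Monic) (p₁ p₂ : R[X]) :
    (p₁ + p₂) /ₘ q = p₁ /ₘ q + p₂ /ₘ q := by
  apply mul_left_cancel₀ hq.ne_zero
  have h := modByMonic_add_div (p₁ + p₂) q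
  rw [add_modByMonic] at h
  linear_combination h - modByMonic_add_div p₁ q - modByMonic_add_div p₂ q

theorem natDegree_modByMonic_lt_of_pos (p : R[X]) (hq : q.Monic) (hd : 0 < q.natDegree) :
    (p %ₘ q).natDegree < q.natDegree :=
  natDegree_modByMonic_lt p hq (by rintro rfl; simp at hd)

theorem natDegree_divByMonic_lt [Nontrivial R] (hq : q.Monic) (hd : 0 < q.natDegree)
    (hp : p /ₘ q ≠ 0) : (p /ₘ q).natDegree < p.natDegree := by
  have : q.natDegree ≤ p.natDegree := by
    by_contra! h
    exact hp ((divByMonic_eq_zero_iff hq).2 (degree_lt_degree h))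
  rw [natDegree_divByMonic _ hq]
  omega

theorem divByMonic_induction [Nontrivial R] {P : R[X] → Prop} (hq : q.Monic)
    (hd : 0 < q.natDegree) (zero : P 0) (step : ∀ p ≠ 0, P (p /ₘ q) → P p) (p : R[X]) : P p := by
  induction h : p.natDegree using Nat.strong_induction_on generalizing p with
  | _ n ih =>
    by_cases hp : p = 0
    · exact hp ▸ zero
    refine step p hp ?_
    by_cases hpq : p /ₘ q = 0
    · exact hpq ▸ zero
    exact ih _ (h ▸ natDegree_divByMonic_lt hq hd hpq) _ rfl

end Polynomial

section Augmentation

variable {K : Type*} [Field K] {u : K[X] → Qinf} {φ : K[X]} {lam : Qinf}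

theorem augValAux_zero_right (n : ℕ) : augValAux u φ lam n 0 = ⊤ := by
  cases n <;> simp [augValAux]

theorem augVal_zero : augVal u φ lam 0 = ⊤ :=
  augValAux_zero_right _

theorem augValAux_congr (hφ : φ.Monic) (hd : 0 < φ.natDegree) {n m : ℕ} {g : K[X]}
    (hn : g.natDegree < n) (hm : g.natDegree < m) :
    augValAux u φ lam n g = augValAux u φ lam m g := by
  induction n generalizing m g with
  | zero => omega
  | succ n ih =>
    obtain ⟨m, rfl⟩ : ∃ k, m = k + 1 := ⟨m - 1, by omega⟩
    by_cases hg : g = 0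
    · simp [hg, augValAux_zero_right]
    simp only [augValAux, if_neg hg]
    by_cases hq : g /ₘ φ = 0
    · simp [hq, augValAux_zero_right]
    have := natDegree_divByMonic_lt hφ hd hq
    rw [ih (by omega) (by omega : (g /ₘ φ).natDegree < m)]

theorem augVal_eq_min (hu0 : u 0 = ⊤) (hφ : φ.Monic) (hd : 0 < φ.natDegree) (g : K[X]) :
    augVal u φ lam g = min (u (g %ₘ φ)) (lam + augVal u φ lam (g /ₘ φ)) := by
  by_cases hg : g = 0
  · simp [hg, augVal_zero, hu0]
  rw [augVal, augValAux, if_neg hg]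
  by_cases hq : g /ₘ φ = 0
  · simp [hq, augValAux_zero_right, augVal_zero]
  rw [augValAux_congr hφ hd (natDegree_divByMonic_lt hφ hd hq) (Nat.lt_succ_self _), augVal]

theorem augVal_of_natDegree_lt (hu0 : u 0 = ⊤) (hφ : φ.Monic) {r : K[X]}
    (hr : r.natDegree < φ.natDegree) : augVal u φ lam r = u r := by
  have hdeg := degree_lt_degree hr
  rw [augVal_eq_min hu0 hφ (by omega), (modByMonic_eq_self_iff hφ).2 hdeg,
    (divByMonic_eq_zero_iff hφ).2 hdeg, augVal_zero, add_top, min_eq_left le_top]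

theorem augVal_self_mul (hu0 : u 0 = ⊤) (hφ : φ.Monic) (hd : 0 < φ.natDegree) (g : K[X]) :
    augVal u φ lam (φ * g) = lam + augVal u φ lam g := by
  rw [augVal_eq_min hu0 hφ hd, self_mul_modByMonic hφ, mul_divByMonic_cancel_left _ hφ, hu0,
    min_eq_right le_top]

theorem augVal_self (hu0 : u 0 = ⊤) (hφ : φ.Monic) (hd : 0 < φ.natDegree) (hu1 : u 1 = 0) :
    augVal u φ lam φ = lam := by
  have h1 : (1 : K[X]).natDegree < φ.natDegree := by simpa using hd
  simpa [augVal_of_natDegree_lt hu0 hφ h1, hu1] using augVal_self_mul hu0 hφ hd (lam := lam) 1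

-- The definitions admit the degree-zero key polynomial `1`, whose augmentation is identically `⊤`.
theorem augVal_one (hu0 : u 0 = ⊤) (g : K[X]) : augVal u 1 lam g = ⊤ := by
  suffices ∀ n g, augValAux u 1 lam n g = ⊤ from this _ g
  intro n
  induction n with
  | zero => exact fun _ => rfl
  | succ n ih => intro g; simp [augValAux, hu0, ih]

theorem augVal_le_map_modByMonic (hu0 : u 0 = ⊤) (hφ : φ.Monic) (hd : 0 < φ.natDegree)
    (g : K[X]) : augVal u φ lam g ≤ u (g %ₘ φ) := by
  rw [augVal_eq_min hu0 hφ hd]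
  exact min_le_left _ _

end Augmentation

section KeyPolynomial

variable {K : Type*} [Field K] {u : K[X] → Qinf} {φ a b g r : K[X]}

theorem VMinimal.not_vDvd (hmin : VMinimal u φ) (ha : a.natDegree < φ.natDegree) :
    ¬ VDvd u φ a :=
  fun h => (hmin a h).not_gt ha

theorem vDvd_of_lt_map_modByMonic (h : u g < u (g %ₘ φ)) : VDvd u φ g :=
  ⟨g /ₘ φ, by rwa [VEquiv, mul_comm, ← modByMonic_eq_sub_mul_div]⟩

theorem VMinimal.map_add_mul (hu : IsPseudoVal u) (hmin : VMinimal u φ)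
    (hr : r.natDegree < φ.natDegree) (s : K[X]) :
    u (r + φ * s) = min (u r) (u (φ * s)) := by
  refine le_antisymm ?_ (hu.min_le_map_add _ _)
  rcases le_or_gt (u r) (u (φ * s)) with h | h
  · rw [min_eq_left h]
    by_contra! hlt
    exact hmin.not_vDvd hr ⟨-s, by rwa [VEquiv, neg_mul, sub_neg_eq_add, mul_comm]⟩
  · rw [min_eq_right h.le, add_comm, hu.map_add_eq_of_lt h]

theorem VMinimal.map_eq_min (hu : IsPseudoVal u) (hmin : VMinimal u φ) (hφ : φ.Monic)
    (hd : 0 < φ.natDegree) (g : K[X]) :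
    u g = min (u (g %ₘ φ)) (u φ + u (g /ₘ φ)) := by
  conv_lhs => rw [← modByMonic_add_div g φ]
  rw [hmin.map_add_mul hu (natDegree_modByMonic_lt_of_pos g hφ hd), hu.map_mul]

theorem IsKeyPoly.map_mul_modByMonic (hu : IsPseudoVal u) (hk : IsKeyPoly u φ)
    (hd : 0 < φ.natDegree) (ha : a.natDegree < φ.natDegree) (hb : b.natDegree < φ.natDegree) :
    u ((a * b) %ₘ φ) = u a + u b := by
  obtain ⟨hφ, hirr, hmin⟩ := hk
  have hndvd : ¬ VDvd u φ (a * b) := fun h =>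
    (hirr a b h).elim (hmin.not_vDvd ha) (hmin.not_vDvd hb)
  rw [← hu.map_mul, hmin.map_eq_min hu hφ hd (a * b), min_eq_left]
  by_contra! h
  exact hndvd (vDvd_of_lt_map_modByMonic (by rwa [hmin.map_eq_min hu hφ hd, min_eq_right h.le]))

end KeyPolynomial

section AugmentationIsPseudoVal

variable {K : Type*} [Field K] {u : K[X] → Qinf} {φ : K[X]} {lam : Qinf}
  (hu : IsPseudoVal u) (hu0 : u 0 = ⊤) (hφ : φ.Monic) (hd : 0 < φ.natDegree)
include hu hu0 hφ hd

theorem augVal_add (f g : K[X]) :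
    min (augVal u φ lam f) (augVal u φ lam g) ≤ augVal u φ lam (f + g) := by
  induction f using divByMonic_induction hφ hd generalizing g with
  | zero => simp [augVal_zero]
  | step f _ ih =>
    rw [augVal_eq_min hu0 hφ hd f, augVal_eq_min hu0 hφ hd g, augVal_eq_min hu0 hφ hd (f + g),
      add_modByMonic, add_divByMonic hφ]
    refine le_min ((min_le_min (min_le_left _ _) (min_le_left _ _)).trans
      (hu.min_le_map_add _ _)) ?_
    calc _ ≤ min (lam + augVal u φ lam (f /ₘ φ)) (lam + augVal u φ lam (g /ₘ φ)) :=
          min_le_min (min_le_right _ _) (min_le_right _ _)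
      _ = lam + min (augVal u φ lam (f /ₘ φ)) (augVal u φ lam (g /ₘ φ)) := min_add_add_left _ _ _
      _ ≤ _ := add_le_add le_rfl (ih _)

theorem map_le_augVal (hmin : VMinimal u φ) (hlam : u φ ≤ lam) (g : K[X]) :
    u g ≤ augVal u φ lam g := by
  induction g using divByMonic_induction hφ hd with
  | zero => simp [hu0, augVal_zero]
  | step g _ ih =>
    rw [hmin.map_eq_min hu hφ hd g, augVal_eq_min hu0 hφ hd g]
    exact min_le_min le_rfl (add_le_add hlam ih)

theorem map_add_augVal_le_augVal_mul (hmin : VMinimal u φ) (hlam : u φ ≤ lam) (c g : K[X]) :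
    u c + augVal u φ lam g ≤ augVal u φ lam (c * g) := by
  induction g using divByMonic_induction hφ hd with
  | zero => simp [augVal_zero]
  | step g _ ih =>
    calc u c + augVal u φ lam g
        = min (u (c * (g %ₘ φ))) (lam + (u c + augVal u φ lam (g /ₘ φ))) := by
          rw [augVal_eq_min hu0 hφ hd g, ← min_add_add_left, hu.map_mul, add_left_comm]
      _ ≤ min (augVal u φ lam (c * (g %ₘ φ))) (augVal u φ lam (φ * (c * (g /ₘ φ)))) := by
          rw [augVal_self_mul hu0 hφ hd]
          exact min_le_min (map_le_augVal hu hu0 hφ hd hmin hlam _) (add_le_add le_rfl ih)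
      _ ≤ augVal u φ lam (c * g) := by
          refine (augVal_add hu hu0 hφ hd _ _).trans_eq ?_
          rw [← mul_left_comm, ← mul_add, modByMonic_add_div]

theorem add_augVal_le_augVal_mul (hmin : VMinimal u φ) (hlam : u φ ≤ lam) (f g : K[X]) :
    augVal u φ lam f + augVal u φ lam g ≤ augVal u φ lam (f * g) := by
  induction f using divByMonic_induction hφ hd with
  | zero => simp [augVal_zero]
  | step f _ ih =>
    calc augVal u φ lam f + augVal u φ lam g
        = min (u (f %ₘ φ) + augVal u φ lam g) (lam + (augVal u φ lam (f /ₘ φ) +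
            augVal u φ lam g)) := by
          rw [augVal_eq_min hu0 hφ hd f, ← min_add_add_right, add_assoc]
      _ ≤ min (augVal u φ lam ((f %ₘ φ) * g)) (augVal u φ lam (φ * ((f /ₘ φ) * g))) := by
          rw [augVal_self_mul hu0 hφ hd]
          exact min_le_min (map_add_augVal_le_augVal_mul hu hu0 hφ hd hmin hlam _ _)
            (add_le_add le_rfl ih)
      _ ≤ augVal u φ lam (f * g) := by
          refine (augVal_add hu hu0 hφ hd _ _).trans_eq ?_
          rw [← mul_assoc, ← add_mul, modByMonic_add_div]

theorem augVal_mul_le_of_lt (hmin : VMinimal u φ) (hlam : u φ ≤ lam) {f g : K[X]}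
    (hf : lam + augVal u φ lam (f /ₘ φ) < u (f %ₘ φ))
    (ih : augVal u φ lam ((f /ₘ φ) * g) ≤ augVal u φ lam (f /ₘ φ) + augVal u φ lam g) :
    augVal u φ lam (f * g) ≤ augVal u φ lam f + augVal u φ lam g := by
  by_cases hg : augVal u φ lam g = ⊤
  · simp [hg]
  have hf' : augVal u φ lam f = lam + augVal u φ lam (f /ₘ φ) := by
    rw [augVal_eq_min hu0 hφ hd f]
    exact min_eq_right hf.le
  have hmain : augVal u φ lam (f * g + -(f %ₘ φ) * g) = augVal u φ lam f + augVal u φ lam g := by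
    rw [show f * g + -(f %ₘ φ) * g = φ * ((f /ₘ φ) * g) by
        linear_combination -g * modByMonic_add_div f φ, augVal_self_mul hu0 hφ hd,
      le_antisymm ih (add_augVal_le_augVal_mul hu hu0 hφ hd hmin hlam _ _), hf', add_assoc]
  have hrest : augVal u φ lam f + augVal u φ lam g < augVal u φ lam (-(f %ₘ φ) * g) :=
    calc _ < u (-(f %ₘ φ)) + augVal u φ lam g := by
          rw [hu.map_neg, hf']
          exact WithTop.add_lt_add_right hg hf
      _ ≤ _ := map_add_augVal_le_augVal_mul hu hu0 hφ hd hmin hlam _ _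
  have := hmain ▸ augVal_add hu hu0 hφ hd (lam := lam) (f * g) (-(f %ₘ φ) * g)
  exact (min_le_iff.1 this).resolve_right (not_le.2 hrest)

theorem augVal_mul (hk : IsKeyPoly u φ) (hlam : u φ ≤ lam) (f g : K[X]) :
    augVal u φ lam (f * g) = augVal u φ lam f + augVal u φ lam g := by
  refine le_antisymm ?_ (add_augVal_le_augVal_mul hu hu0 hφ hd hk.2.2 hlam f g)
  induction hn : f.natDegree + g.natDegree using Nat.strong_induction_on generalizing f g with
  | _ n ih =>
    have hdiv {p : K[X]} (hp : lam + augVal u φ lam (p /ₘ φ) < u (p %ₘ φ)) :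
        (p /ₘ φ).natDegree < p.natDegree :=
      natDegree_divByMonic_lt hφ hd fun h => by simp [h, augVal_zero] at hp
    rcases lt_or_ge (lam + augVal u φ lam (f /ₘ φ)) (u (f %ₘ φ)) with hf | hf
    · exact augVal_mul_le_of_lt hu hu0 hφ hd hk.2.2 hlam hf
        (ih _ (hn ▸ by linarith [hdiv hf]) _ _ rfl)
    rcases lt_or_ge (lam + augVal u φ lam (g /ₘ φ)) (u (g %ₘ φ)) with hg | hg
    · rw [mul_comm, add_comm]
      exact augVal_mul_le_of_lt hu hu0 hφ hd hk.2.2 hlam hg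
        (ih _ (hn ▸ by linarith [hdiv hg]) _ _ rfl)
    calc augVal u φ lam (f * g) ≤ u ((f * g) %ₘ φ) := augVal_le_map_modByMonic hu0 hφ hd _
      _ = u (f %ₘ φ) + u (g %ₘ φ) := by
        rw [mul_modByMonic, hk.map_mul_modByMonic hu hd (natDegree_modByMonic_lt_of_pos f hφ hd)
          (natDegree_modByMonic_lt_of_pos g hφ hd)]
      _ = augVal u φ lam f + augVal u φ lam g := by
        rw [augVal_eq_min hu0 hφ hd f, augVal_eq_min hu0 hφ hd g, min_eq_left hf, min_eq_left hg]

end AugmentationIsPseudoVal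

section AugmentationOfKeyPolynomial

variable {K : Type*} [Field K] {u : K[X] → Qinf} {φ : K[X]} {lam : Qinf}

theorem vDvd_augVal_iff (hu0 : u 0 = ⊤) (hφ : φ.Monic) (hd : 0 < φ.natDegree) {g : K[X]} :
    VDvd (augVal u φ lam) φ g ↔ augVal u φ lam g < u (g %ₘ φ) := by
  refine ⟨fun ⟨q, hq⟩ => hq.trans_le ?_, fun h => vDvd_of_lt_map_modByMonic ?_⟩
  · simpa [sub_modByMonic, mul_self_modByMonic hφ] using
      augVal_le_map_modByMonic hu0 hφ hd (lam := lam) (g - q * φ)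
  · rwa [augVal_of_natDegree_lt hu0 hφ (natDegree_modByMonic_lt_of_pos g hφ hd)]

theorem isPseudoVal_augVal (hu : IsPseudoVal u) (hu0 : u 0 = ⊤) (hk : IsKeyPoly u φ)
    (hlam : u φ ≤ lam) : IsPseudoVal (augVal u φ lam) := by
  rcases Nat.eq_zero_or_pos φ.natDegree with hd | hd
  · obtain rfl := hk.1.natDegree_eq_zero.1 hd
    constructor <;> simp [augVal_one hu0]
  · exact ⟨augVal_mul hu hu0 hk.1 hd hk hlam, augVal_add hu hu0 hk.1 hd⟩

theorem isKeyPoly_augVal (hu : IsPseudoVal u) (hu0 : u 0 = ⊤) (hk : IsKeyPoly u φ)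
    (hlam : u φ ≤ lam) : IsKeyPoly (augVal u φ lam) φ := by
  rcases Nat.eq_zero_or_pos φ.natDegree with hd | hd
  · obtain rfl := hk.1.natDegree_eq_zero.1 hd
    have hndvd (g : K[X]) : ¬ VDvd (augVal u 1 lam) 1 g := fun ⟨q, hq⟩ => by
      simp [VEquiv, augVal_one hu0] at hq
    exact ⟨monic_one, fun a b hab => absurd hab (hndvd _), fun a ha => absurd ha (hndvd _)⟩
  have hφ := hk.1
  have hval {a : K[X]} (ha : ¬ VDvd (augVal u φ lam) φ a) : augVal u φ lam a = u (a %ₘ φ) :=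
    (augVal_le_map_modByMonic hu0 hφ hd a).antisymm
      (not_lt.1 (mt (vDvd_augVal_iff hu0 hφ hd).2 ha))
  refine ⟨hφ, fun a b hab => ?_, fun a ha => ?_⟩
  · by_contra! h
    have := (vDvd_augVal_iff hu0 hφ hd).1 hab
    rw [augVal_mul hu hu0 hφ hd hk hlam, hval h.1, hval h.2, mul_modByMonic,
      hk.map_mul_modByMonic hu hd (natDegree_modByMonic_lt_of_pos a hφ hd)
        (natDegree_modByMonic_lt_of_pos b hφ hd)] at this
    exact lt_irrefl _ this
  · by_contra! h
    have := (vDvd_augVal_iff hu0 hφ hd).1 ha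
    rw [augVal_of_natDegree_lt hu0 hφ h, (modByMonic_eq_self_iff hφ).2 (degree_lt_degree h)] at this
    exact lt_irrefl _ this

end AugmentationOfKeyPolynomial

namespace IsMacLane

variable {K : Type*} [Field K] {vK : K → Qinf} {v : K[X] → Qinf}

theorem isPseudoVal_and_map_zero (hK : IsNormDiscreteVal vK) (hv : IsMacLane vK v) :
    IsPseudoVal v ∧ v 0 = ⊤ := by
  induction hv with
  | gauss => exact ⟨isPseudoVal_gaussVal hK, gaussVal_zero⟩
  | aug _ hk hlt ih => exact ⟨isPseudoVal_augVal ih.1 ih.2 hk hlt.le, augVal_zero⟩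

theorem isPseudoVal (hK : IsNormDiscreteVal vK) (hv : IsMacLane vK v) : IsPseudoVal v :=
  (hv.isPseudoVal_and_map_zero hK).1

theorem map_zero (hK : IsNormDiscreteVal vK) (hv : IsMacLane vK v) : v 0 = ⊤ :=
  (hv.isPseudoVal_and_map_zero hK).2

theorem gaussVal_le (hK : IsNormDiscreteVal vK) (hv : IsMacLane vK v) (g : K[X]) :
    gaussVal vK g ≤ v g := by
  induction hv generalizing g with
  | gauss => exact le_rfl
  | @aug u φ lam hu hk hlt ih =>
    rcases Nat.eq_zero_or_pos φ.natDegree with hd | hd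
    · rw [hk.1.natDegree_eq_zero.1 hd, augVal_one (hu.map_zero hK)]
      exact le_top
    · exact (ih g).trans (map_le_augVal (hu.isPseudoVal hK) (hu.map_zero hK) hk.1 hd hk.2.2
        hlt.le g)

end IsMacLane

section Comparison

variable {K : Type*} [Field K] {u u' : K[X] → Qinf} {φ φ' : K[X]} {lam lam' : Qinf}

theorem augVal_le_of_map_eq_of_le (hu' : IsPseudoVal u') (hu0 : u 0 = ⊤) (hφ : φ.Monic)
    (hd : 0 < φ.natDegree) (hsmall : ∀ r : K[X], r.natDegree < φ.natDegree → u r = u' r)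
    (hlam : lam ≤ u' φ) (g : K[X]) : augVal u φ lam g ≤ u' g := by
  induction g using divByMonic_induction hφ hd with
  | zero => rw [augVal_zero, ← hsmall 0 hd, hu0]
  | step g _ ih =>
    calc augVal u φ lam g ≤ min (u' (g %ₘ φ)) (u' (φ * (g /ₘ φ))) := by
          rw [augVal_eq_min hu0 hφ hd, hsmall _ (natDegree_modByMonic_lt_of_pos g hφ hd),
            hu'.map_mul]
          exact min_le_min le_rfl (add_le_add hlam ih)
      _ ≤ u' g := (hu'.min_le_map_add _ _).trans_eq (by rw [modByMonic_add_div])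

theorem le_augVal_self (hu : IsPseudoVal u) (hu0 : u 0 = ⊤) (hφ : φ.Monic) (hlt : u φ < lam) :
    lam ≤ augVal u φ lam φ := by
  rcases Nat.eq_zero_or_pos φ.natDegree with hd | hd
  · rw [hφ.natDegree_eq_zero.1 hd, augVal_one hu0]
    exact le_top
  · rw [augVal_self hu0 hφ hd (hu.map_one_of_ne_top hlt.ne_top)]

theorem natDegree_le_of_augVal_eq (hu : IsPseudoVal u) (hu0 : u 0 = ⊤) (hφ : φ.Monic)
    (hlt : u φ < lam) (hu' : IsPseudoVal u') (hu'0 : u' 0 = ⊤) (hφ' : φ'.Monic)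
    (hlt' : u' φ' < lam') (heq : augVal u φ lam = augVal u' φ' lam') :
    φ'.natDegree ≤ φ.natDegree := by
  by_contra! hdeg
  have hsmall' {r : K[X]} (hr : r.natDegree < φ'.natDegree) : augVal u φ lam r = u' r := by
    rw [heq, augVal_of_natDegree_lt hu'0 hφ' hr]
  have hu'1 : u' 1 = 0 := hu'.map_one_of_ne_top hlt'.ne_top
  rcases Nat.eq_zero_or_pos φ.natDegree with hd | hd
  · obtain rfl := hφ.natDegree_eq_zero.1 hd
    have := hsmall' (r := 1) (by simpa using hdeg)
    rw [augVal_one hu0, hu'1] at this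
    exact WithTop.top_ne_zero this
  · have hle := augVal_le_of_map_eq_of_le hu' hu0 hφ hd
      (fun r hr => by rw [← hsmall' (hr.trans hdeg), augVal_of_natDegree_lt hu0 hφ hr])
      (by rw [← hsmall' hdeg, augVal_self hu0 hφ hd (hu.map_one_of_ne_top hlt.ne_top)]) φ'
    rw [heq, augVal_self hu'0 hφ' (hd.trans hdeg) hu'1] at hle
    exact hlt'.not_ge hle

theorem augVal_le_augVal_of_le_map_sub (hu : IsPseudoVal u) (hu0 : u 0 = ⊤)
    (hk : IsKeyPoly u φ) (hφ' : φ'.Monic) (hdeg : φ'.natDegree = φ.natDegree) (hlt : u φ < lam)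
    (hsub : lam ≤ u (φ' - φ)) : augVal u φ' lam ≤ augVal u φ lam := by
  intro g
  rcases Nat.eq_zero_or_pos φ.natDegree with hd | hd
  · rw [hk.1.natDegree_eq_zero.1 hd, hφ'.natDegree_eq_zero.1 (hdeg.trans hd)]
  have hsub_deg : (φ' - φ).natDegree < φ.natDegree :=
    IsMonicOfDegree.natDegree_sub_lt hd.ne' ⟨hdeg, hφ'⟩ ⟨rfl, hk.1⟩
  refine augVal_le_of_map_eq_of_le (isPseudoVal_augVal hu hu0 hk hlt.le) hu0 hφ' (hdeg ▸ hd)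
    (fun r hr => (augVal_of_natDegree_lt hu0 hk.1 (hdeg ▸ hr)).symm) ?_ g
  calc lam = min (augVal u φ lam φ) (augVal u φ lam (φ' - φ)) := by
        rw [augVal_self hu0 hk.1 hd (hu.map_one_of_ne_top hlt.ne_top),
          augVal_of_natDegree_lt hu0 hk.1 hsub_deg, min_eq_left hsub]
    _ ≤ augVal u φ lam φ' := (augVal_add hu hu0 hk.1 hd _ _).trans_eq (by rw [add_sub_cancel])

theorem augVal_eq_of_le_map_sub (hu : IsPseudoVal u) (hu0 : u 0 = ⊤) (hk : IsKeyPoly u φ)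
    (hφ' : φ'.Monic) (hdeg : φ'.natDegree = φ.natDegree) (hlt : u φ < lam)
    (hsub : lam ≤ u (φ' - φ)) : augVal u φ' lam = augVal u φ lam := by
  have hequiv := vEquiv_of_lt_of_le_map_sub hu hlt hsub
  refine le_antisymm (augVal_le_augVal_of_le_map_sub hu hu0 hk hφ' hdeg hlt hsub)
    (augVal_le_augVal_of_le_map_sub hu hu0 (hk.of_vEquiv hu hequiv hφ' hdeg) hk.1 hdeg.symm
      (hequiv.map_eq hu ▸ hlt) (hu.map_sub_swap φ φ' ▸ hsub))

end Comparison

section Centre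

variable {K : Type*} [Field K] {vK : K → Qinf} {u v : K[X] → Qinf} {φ φw : K[X]} {lam : Qinf}

theorem le_map_sub_of_isKeyPoly_augVal (hu : IsPseudoVal u) (hu0 : u 0 = ⊤) (hφw : φw.Monic)
    (hlt : u φw < lam) (hk : IsKeyPoly (augVal u φw lam) φ)
    (hdeg : φ.natDegree = φw.natDegree) : lam ≤ u (φ - φw) := by
  rcases Nat.eq_zero_or_pos φw.natDegree with hd | hd
  · rw [hk.1.natDegree_eq_zero.1 (hdeg.trans hd), hφw.natDegree_eq_zero.1 hd, sub_self, hu0]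
    exact le_top
  -- otherwise `φ` would `w`-divide `φ - φw`, which has smaller degree
  by_contra! h
  have hsub_deg : (φ - φw).natDegree < φw.natDegree :=
    IsMonicOfDegree.natDegree_sub_lt hd.ne' ⟨hdeg, hk.1⟩ ⟨rfl, hφw⟩
  refine (hk.2.2 _ ⟨1, ?_⟩).not_gt (hdeg ▸ hsub_deg)
  have hneg_one : (-1 : K[X]).natDegree < φw.natDegree := by simpa using hd
  rw [VEquiv, show φ - φw - 1 * φ = φw * (-1) by ring, augVal_self_mul hu0 hφw hd,
    augVal_of_natDegree_lt hu0 hφw hneg_one, hu.map_neg, hu.map_one_of_ne_top hlt.ne_top,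
    add_zero, augVal_of_natDegree_lt hu0 hφw hsub_deg]
  exact h

theorem vEquiv_of_isKeyPoly_augVal (hu : IsPseudoVal u) (hu0 : u 0 = ⊤) (hφw : φw.Monic)
    (hlt : u φw < lam) (hk : IsKeyPoly (augVal u φw lam) φ)
    (hdeg : φ.natDegree = φw.natDegree) : VEquiv u φw φ :=
  vEquiv_of_lt_of_le_map_sub hu hlt (le_map_sub_of_isKeyPoly_augVal hu hu0 hφw hlt hk hdeg)

theorem IsCentre.isKeyPoly_and_natDegree_eq (hK : IsNormDiscreteVal vK) (hv : IsMacLane vK v)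
    (hφw : IsKeyPoly v φw) (hlt : v φw < lam) (hc : IsCentre vK (augVal v φw lam) φ) :
    IsKeyPoly (augVal v φw lam) φ ∧ φ.natDegree = φw.natDegree := by
  have hvp := hv.isPseudoVal hK
  have hv0 := hv.map_zero hK
  rcases hc with ⟨hgauss, -⟩ | ⟨v', lam', hv', hk, hlt', heq⟩
  · have := (le_augVal_self hvp hv0 hφw.1 hlt).trans (hgauss ▸ hv.gaussVal_le hK φw)
    exact absurd hlt this.not_gt
  have hv'p := hv'.isPseudoVal hK
  have hv'0 := hv'.map_zero hK
  rw [heq]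
  exact ⟨isKeyPoly_augVal hv'p hv'0 hk hlt'.le,
    (natDegree_le_of_augVal_eq hvp hv0 hφw.1 hlt hv'p hv'0 hk.1 hlt' heq).antisymm
      (natDegree_le_of_augVal_eq hv'p hv'0 hk.1 hlt' hvp hv0 hφw.1 hlt heq.symm)⟩

theorem isCentre_of_isKeyPoly_augVal (hK : IsNormDiscreteVal vK) (hv : IsMacLane vK v)
    (hφw : IsKeyPoly v φw) (hlt : v φw < lam) (hk : IsKeyPoly (augVal v φw lam) φ)
    (hdeg : φ.natDegree = φw.natDegree) : IsCentre vK (augVal v φw lam) φ := by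
  have hvp := hv.isPseudoVal hK
  have hv0 := hv.map_zero hK
  have hsub := le_map_sub_of_isKeyPoly_augVal hvp hv0 hφw.1 hlt hk hdeg
  have hequiv := vEquiv_of_lt_of_le_map_sub hvp hlt hsub
  exact Or.inr ⟨v, lam, hv, hφw.of_vEquiv hvp hequiv hk.1 hdeg, hequiv.map_eq hvp ▸ hlt,
    (augVal_eq_of_le_map_sub hvp hv0 hφw hk.1 hdeg hlt hsub).symm⟩

end Centre

theorem centre_iff_keyPoly_deg_eq_general
    {K : Type*} [Field K] (vK : K → Qinf)
    (hK : IsNormDiscreteVal vK)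
    (v : Polynomial K → Qinf) (hv : IsMacLaneVal vK v)
    (φw : Polynomial K) (hφw : IsKeyPoly v φw)
    (lamw : Qinf) (hlamw : v φw < lamw)
    (w : Polynomial K → Qinf) (hw : w = augVal v φw lamw) :
    (∀ φ : Polynomial K,
        IsCentre vK w φ ↔ IsKeyPoly w φ ∧ φ.natDegree = φw.natDegree) ∧
    (∀ φ₁ φ₂ : Polynomial K, IsCentre vK w φ₁ → IsCentre vK w φ₂ →
        VEquiv v φ₁ φ₂) := by
  subst hw
  have hvp := hv.1.isPseudoVal hK
  have hv0 := hv.1.map_zero hK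
  have hcentre (φ : K[X]) (hc : IsCentre vK (augVal v φw lamw) φ) :=
    hc.isKeyPoly_and_natDegree_eq hK hv.1 hφw hlamw
  refine ⟨fun φ => ⟨hcentre φ, fun ⟨hk, hdeg⟩ =>
    isCentre_of_isKeyPoly_augVal hK hv.1 hφw hlamw hk hdeg⟩, fun φ₁ φ₂ h₁ h₂ => ?_⟩
  obtain ⟨hk₁, hdeg₁⟩ := hcentre φ₁ h₁
  obtain ⟨hk₂, hdeg₂⟩ := hcentre φ₂ h₂
  exact ((vEquiv_of_isKeyPoly_augVal hvp hv0 hφw.1 hlamw hk₁ hdeg₁).symm hvp).trans hvp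
    (vEquiv_of_isKeyPoly_augVal hvp hv0 hφw.1 hlamw hk₂ hdeg₂)

/-- Lemma `lem:centre`.
Let `w ≠ v₀` be a MacLane pseudo-valuation, written as an augmentation
`w = [v, w(φw) = λw]` of a MacLane valuation `v` by a key polynomial `φw` over `v`.
Then `φ ∈ K[x]` is a centre of `w` iff `φ` is a key polynomial over `w` and
`deg φ = deg w` (`= deg φw`).  Moreover any two centres of `w` are `v`-equivalent. -/
theorem centre_iff_keyPoly_deg_eq
    {K : Type*} [Field K] (vK : K → Qinf)
    (hK : IsNormDiscreteVal vK) (hcompl : IsCompleteVal vK)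
    (v : Polynomial K → Qinf) (hv : IsMacLaneVal vK v)
    (φw : Polynomial K) (hφw : IsKeyPoly v φw)
    (lamw : Qinf) (hlamw : v φw < lamw)
    (w : Polynomial K → Qinf) (hw : w = augVal v φw lamw) :
    (∀ φ : Polynomial K,
        IsCentre vK w φ ↔ IsKeyPoly w φ ∧ φ.natDegree = φw.natDegree) ∧
    (∀ φ₁ φ₂ : Polynomial K, IsCentre vK w φ₁ → IsCentre vK w φ₂ →
        VEquiv v φ₁ φ₂) :=
  centre_iff_keyPoly_deg_eq_general vK hK v hv φw hφw lamw hlamw w hw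
end

section
/- Let v be a MacLane pseudo-valuation and let s = D_v ∩ R be nonempty. Then v ≤ v_s, and the pair (s, v_s) is a MacLane cluster for f. -/
open Polynomial
open scoped Classical

/-- `vs` is the MacLane pseudo-valuation `v_s = v_{F₁} ∧ … ∧ v_{F_m}`, the meet of
the pseudo-valuations `v_F (g) = min_{F(r)=0} v_K(g(r))` over the monic irreducible
factors `F` of `∏_{r ∈ s} (x - r)` (i.e. the monic irreducible `F ∈ K[x]` with a
root in `s`); here `w ≤ v_F` is expressed as `w g ≤ v_K(g(r))` for all `g` and
all roots `r` of `F`. -/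
def IsVsOf {K : Type*} [Field K] {Kb : Type*} [Field Kb] [Algebra K Kb]
    (vK : K → Qinf) (vbar : Kb → Qinf) (s : Set Kb)
    (vs : Polynomial K → Qinf) : Prop :=
  IsMacLane vK vs ∧
  (∀ F : Polynomial K, F.Monic → Irreducible F →
      (∃ r ∈ s, Polynomial.aeval r F = 0) →
      ∀ (g : Polynomial K) (r : Kb), Polynomial.aeval r F = 0 →
        vs g ≤ vbar (Polynomial.aeval r g)) ∧
  (∀ w : Polynomial K → Qinf, IsMacLane vK w →
      (∀ F : Polynomial K, F.Monic → Irreducible F →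
        (∃ r ∈ s, Polynomial.aeval r F = 0) →
        ∀ (g : Polynomial K) (r : Kb), Polynomial.aeval r F = 0 →
          w g ≤ vbar (Polynomial.aeval r g)) →
      w ≤ vs)

/-!
Since `s ⊆ D_v`, the pseudo-valuation `v` is bounded by `v_K(g(r))` at every point `r` of `s`;
the one non-formal input is that `v_K(g(r))` is the same at all roots `r` of an irreducible `F`,
so that `v ≤ v_F` for every `F` with a root in `s` and hence `v ≤ v_s`. This holds because `K`
is complete: `a ↦ exp (-v_K a)` makes `K` a complete nonarchimedean field, so the extension
`exp (-v̄)` to `K̄` is its spectral norm (`spectralNorm_unique`), which depends only on minimal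
polynomials. Then `D_{v_s} ∩ R = s` (`⊇` as `v_s ≤ v_F` for the minimal polynomial `F` of each
point of `s`, `⊆` as `v ≤ v_s`), and the same argument shows that every MacLane `w` with
`s = D_w ∩ R` satisfies `w ≤ v_s`, so no `w > v_s` cuts out `s`.
-/

namespace Qinf

noncomputable def expNeg : Qinf → ℝ :=
  WithTop.recTopCoe 0 fun q => Real.exp (-q)

@[simp] lemma expNeg_top : expNeg ⊤ = 0 := rfl

@[simp] lemma expNeg_coe (q : ℚ) : expNeg q = Real.exp (-q) := rfl

lemma expNeg_nonneg (x : Qinf) : 0 ≤ expNeg x := by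
  induction x using WithTop.recTopCoe <;> simp [Real.exp_nonneg]

lemma expNeg_eq_zero_iff {x : Qinf} : expNeg x = 0 ↔ x = ⊤ := by
  induction x using WithTop.recTopCoe <;> simp [Real.exp_ne_zero]

lemma expNeg_add (x y : Qinf) : expNeg (x + y) = expNeg x * expNeg y := by
  induction x using WithTop.recTopCoe <;> induction y using WithTop.recTopCoe <;>
    simp [← WithTop.coe_add, ← Real.exp_add, add_comm]

lemma expNeg_le_expNeg_iff {x y : Qinf} : expNeg x ≤ expNeg y ↔ y ≤ x := by
  induction x using WithTop.recTopCoe <;> induction y using WithTop.recTopCoe <;>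
    simp [Real.exp_nonneg, Real.exp_pos]

lemma expNeg_injective : Function.Injective expNeg := fun _ _ h =>
  le_antisymm (expNeg_le_expNeg_iff.1 h.ge) (expNeg_le_expNeg_iff.1 h.le)

lemma expNeg_antitone : Antitone expNeg := fun _ _ h => expNeg_le_expNeg_iff.2 h

lemma expNeg_lt_expNeg_iff {x y : Qinf} : expNeg x < expNeg y ↔ y < x := by
  simp only [lt_iff_not_ge, expNeg_le_expNeg_iff]

lemma exists_expNeg_lt {ε : ℝ} (hε : 0 < ε) : ∃ M : ℚ, expNeg M < ε := by
  obtain ⟨M, hM⟩ := exists_rat_gt (-Real.log ε)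
  refine ⟨M, ?_⟩
  rw [expNeg_coe, ← Real.exp_log hε, Real.exp_lt_exp]
  linarith

end Qinf

namespace IsPseudoVal

variable {L : Type*} [Field L] {w : L → Qinf}

lemma expNeg_map_add_le_max (hw : IsPseudoVal w) (a b : L) :
    Qinf.expNeg (w (a + b)) ≤ max (Qinf.expNeg (w a)) (Qinf.expNeg (w b)) := by
  rw [← Qinf.expNeg_antitone.map_min]
  exact Qinf.expNeg_antitone (hw.min_le_map_add a b)

noncomputable def absoluteValue (hw : IsPseudoVal w) (htop : ∀ a, w a = ⊤ ↔ a = 0) :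
    AbsoluteValue L ℝ where
  toFun a := Qinf.expNeg (w a)
  map_mul' a b := by simp only [hw.map_mul, Qinf.expNeg_add]
  nonneg' a := Qinf.expNeg_nonneg _
  eq_zero' a := Qinf.expNeg_eq_zero_iff.trans (htop a)
  add_le' a b := (hw.expNeg_map_add_le_max a b).trans
    (max_le_add_of_nonneg (Qinf.expNeg_nonneg _) (Qinf.expNeg_nonneg _))

lemma isNonarchimedean_absoluteValue (hw : IsPseudoVal w) (htop : ∀ a, w a = ⊤ ↔ a = 0) :
    IsNonarchimedean (hw.absoluteValue htop) :=
  hw.expNeg_map_add_le_max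

end IsPseudoVal

namespace IsNormDiscreteVal

variable {K : Type*} [Field K] {vK : K → Qinf} (hK : IsNormDiscreteVal vK)

noncomputable abbrev nontriviallyNormedField : NontriviallyNormedField K :=
  { (hK.pseudo.absoluteValue hK.top_iff).toNormedField with
    non_trivial := by
      obtain ⟨π, hπ⟩ := hK.normalised
      refine ⟨π⁻¹, ?_⟩
      change 1 < hK.pseudo.absoluteValue hK.top_iff π⁻¹
      rw [map_inv₀]
      change 1 < (Qinf.expNeg (vK π))⁻¹
      rw [hπ, Qinf.expNeg_coe, ← Real.exp_neg]
      simp }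

lemma isUltrametricDist :
    letI := hK.nontriviallyNormedField
    IsUltrametricDist K :=
  letI := hK.nontriviallyNormedField
  IsUltrametricDist.isUltrametricDist_of_isNonarchimedean_norm
    (hK.pseudo.isNonarchimedean_absoluteValue hK.top_iff)

lemma completeSpace (hcompl : IsCompleteVal vK) :
    letI := hK.nontriviallyNormedField
    CompleteSpace K := by
  let := hK.nontriviallyNormedField
  have dist_eq (a b : K) : dist a b = Qinf.expNeg (vK (a - b)) := dist_eq_norm a b
  refine Metric.complete_of_cauchySeq_tendsto fun u hu => ?_
  obtain ⟨a, ha⟩ := hcompl u fun M => by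
    obtain ⟨N, hN⟩ := Metric.cauchySeq_iff.1 hu _ (Real.exp_pos (-M))
    refine ⟨N, fun m hm n hn => ?_⟩
    have := hN m hm n hn
    rw [dist_eq, ← Qinf.expNeg_coe, Qinf.expNeg_lt_expNeg_iff] at this
    exact this.le
  refine ⟨a, Metric.tendsto_atTop.2 fun ε hε => ?_⟩
  obtain ⟨M, hM⟩ := Qinf.exists_expNeg_lt hε
  obtain ⟨N, hN⟩ := ha M
  exact ⟨N, fun n hn => (dist_eq _ _).trans_lt
    ((Qinf.expNeg_antitone (hN n hn)).trans_lt hM)⟩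

end IsNormDiscreteVal

namespace IsExtVal

variable {K : Type*} [Field K] {Kb : Type*} [Field Kb] [Algebra K Kb]
  {vK : K → Qinf} {vbar : Kb → Qinf}

theorem map_eq_of_minpoly_eq [Algebra.IsAlgebraic K Kb] (hK : IsNormDiscreteVal vK)
    (hcompl : IsCompleteVal vK) (hvbar : IsExtVal vK vbar) {x y : Kb}
    (hxy : minpoly K x = minpoly K y) : vbar x = vbar y := by
  let := hK.nontriviallyNormedField
  have := hK.isUltrametricDist
  have := hK.completeSpace hcompl
  let absbar := hvbar.pseudo.absoluteValue hvbar.top_iff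
  let normbar : AlgebraNorm K Kb :=
    { toFun := absbar
      map_zero' := absbar.map_zero
      add_le' := absbar.add_le
      neg' := absbar.map_neg
      mul_le' a b := (absbar.map_mul a b).le
      eq_zero_of_map_eq_zero' _ := absbar.eq_zero.1
      smul' a b := by
        change absbar (a • b) = Qinf.expNeg (vK a) * absbar b
        rw [Algebra.smul_def, absbar.map_mul, ← hvbar.extends_vK]
        rfl }
  have hspectral : normbar = spectralAlgNorm K Kb :=
    spectralNorm_unique fun a n _ => absbar.map_pow a n
  apply Qinf.expNeg_injective
  change normbar x = normbar y
  rw [hspectral, spectralAlgNorm_def, spectralAlgNorm_def, spectralNorm, spectralNorm, hxy]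

theorem map_aeval_eq_of_isRoot [IsAlgClosure K Kb] (hK : IsNormDiscreteVal vK)
    (hcompl : IsCompleteVal vK) (hvbar : IsExtVal vK vbar) {F : K[X]} (hF : F.Monic)
    (hFirr : Irreducible F) {r₀ r : Kb} (h₀ : aeval r₀ F = 0) (h : aeval r F = 0)
    (g : K[X]) : vbar (aeval r g) = vbar (aeval r₀ g) := by
  have := IsAlgClosure.isAlgebraic (R := K) (K := Kb)
  obtain ⟨σ, hσ⟩ : ∃ σ : Gal(Kb/K), σ r₀ = r := by
    refine minpoly.exists_algEquiv_of_root' (Algebra.IsAlgebraic.isAlgebraic r₀) ?_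
    rwa [← minpoly.eq_of_irreducible_of_monic hFirr h₀ hF]
  refine hvbar.map_eq_of_minpoly_eq hK hcompl ?_
  rw [← hσ, aeval_algEquiv, AlgHom.comp_apply]
  exact minpoly.algEquiv_eq σ _

end IsExtVal

section Dset

variable {K : Type*} [Field K] {Kb : Type*} [Field Kb] [Algebra K Kb] {vbar : Kb → Qinf}

lemma Dset_antitone : Antitone (Dset (K := K) vbar) :=
  fun _ _ hvw _ hα g => (hvw g).trans (hα g)

variable {vK : K → Qinf} {s : Set Kb} {u vs : K[X] → Qinf}

theorem IsExtVal.le_map_aeval_of_subset_Dset [IsAlgClosure K Kb] (hK : IsNormDiscreteVal vK)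
    (hcompl : IsCompleteVal vK) (hvbar : IsExtVal vK vbar) (hsu : s ⊆ Dset vbar u)
    (F : K[X]) (hF : F.Monic) (hFirr : Irreducible F) (hFs : ∃ r ∈ s, aeval r F = 0)
    (g : K[X]) (r : Kb) (hr : aeval r F = 0) : u g ≤ vbar (aeval r g) := by
  obtain ⟨r₀, hr₀s, hr₀⟩ := hFs
  rw [hvbar.map_aeval_eq_of_isRoot hK hcompl hF hFirr hr₀ hr g]
  exact hsu hr₀s g

theorem IsVsOf.le_of_subset_Dset [IsAlgClosure K Kb] (hvs : IsVsOf vK vbar s vs)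
    (hK : IsNormDiscreteVal vK) (hcompl : IsCompleteVal vK) (hvbar : IsExtVal vK vbar)
    (hu : IsMacLane vK u) (hsu : s ⊆ Dset vbar u) : u ≤ vs :=
  hvs.2.2 u hu (hvbar.le_map_aeval_of_subset_Dset hK hcompl hsu)

theorem IsVsOf.subset_Dset [Algebra.IsAlgebraic K Kb] (hvs : IsVsOf vK vbar s vs) :
    s ⊆ Dset vbar vs := fun α hα g =>
  have hα_int : IsIntegral K α := (Algebra.IsAlgebraic.isAlgebraic α).isIntegral
  hvs.2.1 (minpoly K α) (minpoly.monic hα_int) (minpoly.irreducible hα_int)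
    ⟨α, hα, minpoly.aeval K α⟩ g α (minpoly.aeval K α)

end Dset

theorem le_vs_and_vs_cluster_general
    {K : Type*} [Field K] {Kb : Type*} [Field Kb] [Algebra K Kb] [IsAlgClosure K Kb]
    (vK : K → Qinf) (hK : IsNormDiscreteVal vK) (hcompl : IsCompleteVal vK)
    (vbar : Kb → Qinf) (hvbar : IsExtVal vK vbar)
    (f : Polynomial K)
    (v : Polynomial K → Qinf) (hv : IsMacLane vK v)
    (s : Set Kb) (hs : s = Dset vbar v ∩ rootSetOf f) (hne : s.Nonempty)
    (vs : Polynomial K → Qinf) (hvs : IsVsOf vK vbar s vs) :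
    v ≤ vs ∧ IsMLCluster vK vbar f s vs := by
  have := IsAlgClosure.isAlgebraic (R := K) (K := Kb)
  have hv_le : v ≤ vs := hvs.le_of_subset_Dset hK hcompl hvbar hv (hs ▸ Set.inter_subset_left)
  refine ⟨hv_le, hvs.1, hne, ?_, ?_⟩
  · refine (Set.subset_inter hvs.subset_Dset (hs ▸ Set.inter_subset_right)).antisymm ?_
    rw [hs]
    exact Set.inter_subset_inter_left _ (Dset_antitone hv_le)
  · intro w hw hvs_lt hsw
    exact absurd (hvs.le_of_subset_Dset hK hcompl hvbar hw (hsw ▸ Set.inter_subset_left))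
      hvs_lt.not_ge

/-- Lemma `lem:vs`.
Let `v` be a MacLane pseudo-valuation with `s = D_v ∩ R` nonempty.  Then `v ≤ v_s`
and `(s, v_s)` is a MacLane cluster for `f`. -/
theorem le_vs_and_vs_cluster
    {K : Type*} [Field K] {Kb : Type*} [Field Kb] [Algebra K Kb] [IsAlgClosure K Kb]
    (vK : K → Qinf) (hK : IsNormDiscreteVal vK) (hcompl : IsCompleteVal vK)
    (vbar : Kb → Qinf) (hvbar : IsExtVal vK vbar)
    (f : Polynomial K) (hsep : f.Separable)
    (hfint : ∀ i : ℕ, 0 ≤ vK ((Polynomial.C f.leadingCoeff⁻¹ * f).coeff i))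
    (v : Polynomial K → Qinf) (hv : IsMacLane vK v)
    (s : Set Kb) (hs : s = Dset vbar v ∩ rootSetOf f) (hne : s.Nonempty)
    (vs : Polynomial K → Qinf) (hvs : IsVsOf vK vbar s vs) :
    v ≤ vs ∧ IsMLCluster vK vbar f s vs :=
  le_vs_and_vs_cluster_general vK hK hcompl vbar hvbar f v hv s hs hne vs hvs
end
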